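/- Let q be an odd prime and let C be a k-dimensional ZMod q-subspace of (Fin n → ZMod q) with |w_L(C)| = (q^k − 1)/2 (a Lee-MWS code). Then any two nonzero codewords u, v ∈ C have at least one support position in common: supp(u) ∩ supp(v) ≠ ∅. -/
import Mathlib


/-- The Lee weight of an element of `ZMod q`. -/
def leeWt {q : ℕ} (α : ZMod q) : ℕ := min α.val (q - α.val)

/-- The Lee weight of a vector. -/
def leeW {q n : ℕ} (c : Fin n → ZMod q) : ℕ := ∑ i, leeWt (c i)

/-- The Lee weight set of a set of vectors. -/
def leeSet {q n : ℕ} (C : Set (Fin n → ZMod q)) : Set ℕ :=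
  {x | ∃ c ∈ C, c ≠ 0 ∧ leeW c = x}

lemma leeWt_neg {q : ℕ} [NeZero q] (x : ZMod q) : leeWt (-x) = leeWt x := by
  unfold leeWt
  rcases eq_or_ne x 0 with h | h
  · simp [h]
  · rw [ZMod.neg_val, if_neg h, Nat.sub_sub_self (ZMod.val_lt x).le]
    exact min_comm _ _

lemma leeW_neg {q n : ℕ} [NeZero q] (c : Fin n → ZMod q) : leeW (-c) = leeW c := by
  unfold leeW
  simp [leeWt_neg]

theorem stmt8 (q n k : ℕ) (hq : q.Prime) (hodd : Odd q)
    (C : Submodule (ZMod q) (Fin n → ZMod q))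
    (hdim : Module.finrank (ZMod q) C = k)
    (hMWS : (leeSet (C : Set (Fin n → ZMod q))).ncard = (q ^ k - 1) / 2) :
    ∀ u ∈ C, ∀ v ∈ C, u ≠ 0 → v ≠ 0 →
      (Function.support u ∩ Function.support v).Nonempty := by
  haveI : Fact q.Prime := ⟨hq⟩
  haveI : NeZero q := ⟨hq.ne_zero⟩
  intro u hu v hv hu0 hv0
  by_contra hdisj
  rw [Set.not_nonempty_iff_eq_empty] at hdisj
  have hdis : ∀ i, u i = 0 ∨ v i = 0 := by
    intro i
    by_contra h
    push_neg at h
    have : i ∈ Function.support u ∩ Function.support v := ⟨h.1, h.2⟩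
    rw [hdisj] at this
    exact this
  -- two is nonzero in ZMod q
  have h2 : ∀ x : ZMod q, x + x = 0 → x = 0 := by
    intro x hx
    have h2q : (2 : ZMod q) ≠ 0 := by
      intro h
      have : (q : ℕ) ∣ 2 := by
        have := (ZMod.natCast_eq_zero_iff 2 q).mp (by exact_mod_cast h)
        exact this
      have hle : q ≤ 2 := Nat.le_of_dvd (by norm_num) this
      have h2le : 2 ≤ q := hq.two_le
      obtain ⟨m, hm⟩ := hodd
      omega
    have : (2 : ZMod q) * x = 0 := by rw [two_mul]; exact hx
    rcases mul_eq_zero.mp this with h | h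
    · exact absurd h h2q
    · exact h
  set a := u + v with ha_def
  set b := u - v with hb_def
  have ha : a ∈ C := C.add_mem hu hv
  have hb : b ∈ C := C.sub_mem hu hv
  have ha0 : a ≠ 0 := by
    intro h
    obtain ⟨i, hi⟩ := Function.ne_iff.mp hu0
    have : u i + v i = 0 := congrFun h i
    rcases hdis i with h' | h'
    · exact hi h'
    · rw [h', add_zero] at this; exact hi this
  have hb0 : b ≠ 0 := by
    intro h
    obtain ⟨i, hi⟩ := Function.ne_iff.mp hu0
    have : u i - v i = 0 := congrFun h i
    rcases hdis i with h' | h'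
    · exact hi h'
    · rw [h', sub_zero] at this; exact hi this
  have hab : a ≠ b := by
    intro h
    apply hv0
    funext i
    have := congrFun h i
    simp only [ha_def, hb_def, Pi.add_apply, Pi.sub_apply] at this
    have hvv : v i + v i = 0 := by linear_combination this
    exact h2 _ hvv
  have hanb : a ≠ -b := by
    intro h
    apply hu0
    funext i
    have := congrFun h i
    simp only [ha_def, hb_def, Pi.add_apply, Pi.neg_apply, Pi.sub_apply] at this
    have huu : u i + u i = 0 := by linear_combination this
    exact h2 _ huu
  have hana : a ≠ -a := by
    intro h
    apply ha0
    funext i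
    have := congrFun h i
    simp only [Pi.neg_apply] at this
    exact h2 _ (by linear_combination this)
  have hbnb : b ≠ -b := by
    intro h
    apply hb0
    funext i
    have := congrFun h i
    simp only [Pi.neg_apply] at this
    exact h2 _ (by linear_combination this)
  have hwab : leeW a = leeW b := by
    unfold leeW
    apply Finset.sum_congr rfl
    intro i _
    rcases hdis i with h | h
    · have : a i = v i := by simp [ha_def, h]
      have hbv : b i = -v i := by simp [hb_def, h]
      rw [this, hbv, leeWt_neg]
    · have : a i = u i := by simp [ha_def, h]
      have hbv : b i = u i := by simp [hb_def, h]
      rw [this, hbv]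
  -- counting
  classical
  set T : Finset (Fin n → ZMod q) := Finset.univ.filter (fun c => c ∈ C ∧ c ≠ 0) with hT_def
  have hTmem : ∀ c, c ∈ T ↔ c ∈ C ∧ c ≠ 0 := by
    intro c; simp [hT_def]
  have hTcard : T.card = q ^ k - 1 := by
    have hcardC : Fintype.card C = q ^ k := by
      rw [Module.card_eq_pow_finrank (K := ZMod q) (V := C), ZMod.card, hdim]
    have h1 : (Finset.univ.filter (fun c : Fin n → ZMod q => c ∈ C)).card = q ^ k := by
      rw [← hcardC, ← Fintype.card_subtype]
    have h2' : T = (Finset.univ.filter (fun c : Fin n → ZMod q => c ∈ C)).erase 0 := by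
      ext c
      simp [hT_def, and_comm]
    rw [h2', Finset.card_erase_of_mem (by simp), h1]
  set W : Finset ℕ := T.image leeW with hW_def
  have hWcard : W.card = (q ^ k - 1) / 2 := by
    rw [← hMWS]
    have : leeSet (C : Set (Fin n → ZMod q)) = ↑W := by
      ext x
      simp only [leeSet, Set.mem_setOf_eq, hW_def, Finset.coe_image, Set.mem_image,
        Finset.mem_coe, hTmem]
      constructor
      · rintro ⟨c, hc, hc0, rfl⟩; exact ⟨c, ⟨hc, hc0⟩, rfl⟩
      · rintro ⟨c, ⟨hc, hc0⟩, rfl⟩; exact ⟨c, hc, hc0, rfl⟩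
    rw [this, Set.ncard_coe_finset]
  have hsum : T.card = ∑ w ∈ W, (T.filter (fun c => leeW c = w)).card := by
    apply Finset.card_eq_sum_card_fiberwise
    intro x hx
    exact Finset.mem_image_of_mem leeW hx
  have hfib2 : ∀ w ∈ W, 2 ≤ (T.filter (fun c => leeW c = w)).card := by
    intro w hw
    obtain ⟨c, hc, rfl⟩ := Finset.mem_image.mp hw
    rw [hTmem] at hc
    have hcc : c ≠ -c := by
      intro h
      apply hc.2
      funext i
      have := congrFun h i
      simp only [Pi.neg_apply] at this
      exact h2 _ (by linear_combination this)
    have hsub : ({c, -c} : Finset _) ⊆ T.filter (fun x => leeW x = leeW c) := by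
      intro x hx
      rcases Finset.mem_insert.mp hx with rfl | hx
      · exact Finset.mem_filter.mpr ⟨(hTmem _).mpr hc, rfl⟩
      · rw [Finset.mem_singleton] at hx
        subst hx
        refine Finset.mem_filter.mpr ⟨(hTmem _).mpr ⟨C.neg_mem hc.1, neg_ne_zero.mpr hc.2⟩, ?_⟩
        exact leeW_neg c
    calc 2 = ({c, -c} : Finset _).card := by rw [Finset.card_insert_of_notMem (by simpa using hcc), Finset.card_singleton]
    _ ≤ _ := Finset.card_le_card hsub
  have haT : a ∈ T := (hTmem _).mpr ⟨ha, ha0⟩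
  have hw0 : leeW a ∈ W := Finset.mem_image_of_mem leeW haT
  have hfib4 : 4 ≤ (T.filter (fun c => leeW c = leeW a)).card := by
    have hsub : ({a, -a, b, -b} : Finset _) ⊆ T.filter (fun x => leeW x = leeW a) := by
      intro x hx
      simp only [Finset.mem_insert, Finset.mem_singleton] at hx
      rcases hx with rfl | rfl | rfl | rfl
      · exact Finset.mem_filter.mpr ⟨haT, rfl⟩
      · exact Finset.mem_filter.mpr ⟨(hTmem _).mpr ⟨C.neg_mem ha, neg_ne_zero.mpr ha0⟩, leeW_neg a⟩
      · exact Finset.mem_filter.mpr ⟨(hTmem _).mpr ⟨hb, hb0⟩, hwab.symm⟩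
      · exact Finset.mem_filter.mpr ⟨(hTmem _).mpr ⟨C.neg_mem hb, neg_ne_zero.mpr hb0⟩,
          by rw [leeW_neg]; exact hwab.symm⟩
    have hanb' : (-a : Fin n → ZMod q) ≠ b := by
      intro h; exact hanb (by rw [← h, neg_neg])
    have hanbb : (-a : Fin n → ZMod q) ≠ -b := fun h => hab (neg_injective h)
    have hcard4 : ({a, -a, b, -b} : Finset _).card = 4 := by
      rw [Finset.card_insert_of_notMem (by simp [hana, hab, hanb]),
        Finset.card_insert_of_notMem (by simp [hanb', hanbb]),
        Finset.card_insert_of_notMem (by simpa using hbnb), Finset.card_singleton]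
    calc 4 = ({a, -a, b, -b} : Finset _).card := hcard4.symm
    _ ≤ _ := Finset.card_le_card hsub
  have hbound : 2 * W.card + 2 ≤ T.card := by
    rw [hsum, ← Finset.add_sum_erase _ _ hw0]
    have h1 : 2 * (W.erase (leeW a)).card ≤ ∑ w ∈ W.erase (leeW a), (T.filter (fun c => leeW c = w)).card := by
      calc 2 * (W.erase (leeW a)).card
          = ∑ _w ∈ W.erase (leeW a), 2 := by rw [Finset.sum_const, smul_eq_mul, mul_comm]
      _ ≤ _ := Finset.sum_le_sum (fun w hw => hfib2 w (Finset.mem_of_mem_erase hw))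
    have h2' : (W.erase (leeW a)).card = W.card - 1 := Finset.card_erase_of_mem hw0
    have hWpos : 1 ≤ W.card := Finset.card_pos.mpr ⟨leeW a, hw0⟩
    omega
  have heven : 2 ∣ q ^ k - 1 := by
    have : Odd (q ^ k) := hodd.pow
    obtain ⟨m, hm⟩ := this
    omega
  omega
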